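/- arXiv:2106.13852 — 8 statements merged into one kernel-verified Lean document; each statement's English description precedes it below -/
import Mathlib

section
/- If a set R of regions of a transition system consists of pairwise disjoint regions whose union covers all states, then for every event e and region r_i ∈ R such that e exits r_i, there exists a distinct region r_j ∈ R such that e enters r_j. -/
def Enters {S E : Type*} (T : S → E → S → Prop) (e : E) (r : Set S) : Prop :=
  ∃ s s', T s e s' ∧ s ∉ r ∧ s' ∈ r

def Exits {S E : Type*} (T : S → E → S → Prop) (e : E) (r : Set S) : Prop :=
  ∃ s s', T s e s' ∧ s ∈ r ∧ s' ∉ r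

def IsRegion {S E : Type*} (T : S → E → S → Prop) (r : Set S) : Prop :=
  r.Nonempty ∧ r ≠ Set.univ ∧
  ∀ e : E,
    (Enters T e r → ∀ s s', T s e s' → s ∉ r ∧ s' ∈ r) ∧
    (Exits T e r → ∀ s s', T s e s' → s ∈ r ∧ s' ∉ r)

theorem Set.exists_mem_ne_notMem_of_pairwise_disjoint_of_sUnion_eq_univ {S : Type*}
    {R : Set (Set S)} (hDisj : R.Pairwise Disjoint) (hCov : ⋃₀ R = Set.univ)
    {r : Set S} (hr : r ∈ R) {s s' : S} (hs : s ∈ r) (hs' : s' ∉ r) :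
    ∃ r' ∈ R, r' ≠ r ∧ s ∉ r' ∧ s' ∈ r' := by
  obtain ⟨r', hr', hs'r'⟩ : s' ∈ ⋃₀ R := hCov ▸ Set.mem_univ s'
  have hne : r' ≠ r := by
    rintro rfl
    exact hs' hs'r'
  exact ⟨r', hr', hne, fun hsr' => (hDisj hr' hr hne).notMem_of_mem_right hs hsr', hs'r'⟩

theorem exit_implies_enter_general {S E : Type*} (T : S → E → S → Prop)
    (R : Set (Set S))
    (hDisj : ∀ r ∈ R, ∀ r' ∈ R, r ≠ r' → Disjoint r r')
    (hCov : ⋃₀ R = Set.univ) :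
    ∀ e : E, ∀ ri ∈ R, Exits T e ri → ∃ rj ∈ R, rj ≠ ri ∧ Enters T e rj := by
  rintro e ri hri ⟨s, s', hT, hs, hs'⟩
  obtain ⟨rj, hrj, hne, hsj, hs'j⟩ :=
    Set.exists_mem_ne_notMem_of_pairwise_disjoint_of_sUnion_eq_univ hDisj hCov hri hs hs'
  exact ⟨rj, hrj, hne, s, s', hT, hsj, hs'j⟩

/-- If an event exits a region of a disjoint covering set of regions, it
enters some other region of the set. -/
theorem exit_implies_enter {S E : Type*} (T : S → E → S → Prop)
    (hNoSelfLoop : ∀ s e s', T s e s' → s ≠ s')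
    (R : Set (Set S))
    (hReg : ∀ r ∈ R, IsRegion T r)
    (hDisj : ∀ r ∈ R, ∀ r' ∈ R, r ≠ r' → Disjoint r r')
    (hCov : ⋃₀ R = Set.univ) :
    ∀ e : E, ∀ ri ∈ R, Exits T e ri → ∃ rj ∈ R, rj ≠ ri ∧ Enters T e rj :=
  exit_implies_enter_general T R hDisj hCov
end

section
/- In a strongly connected transition system, every region is the pre-region of some event, i.e., for every region r there exists an event e and a transition labeled e exiting r. -/
theorem Relation.ReflTransGen.exists_step_mem_not_mem {α : Type*} {R : α → α → Prop}
    {p : α → Prop} {a b : α} (hab : Relation.ReflTransGen R a b) (ha : p a) (hb : ¬ p b) :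
    ∃ x y, R x y ∧ p x ∧ ¬ p y := by
  induction hab with
  | refl => exact absurd ha hb
  | @tail x y _ hxy ih =>
    by_cases hx : p x
    · exact ⟨x, y, hxy, hx, hb⟩
    · exact ih hx

theorem exists_exits_of_reflTransGen {S E : Type*} {T : S → E → S → Prop} {r : Set S} {a b : S}
    (hab : Relation.ReflTransGen (fun a b => ∃ e, T a e b) a b) (ha : a ∈ r) (hb : b ∉ r) :
    ∃ e, Exits T e r := by
  obtain ⟨x, y, ⟨e, hxy⟩, hx, hy⟩ := hab.exists_step_mem_not_mem ha hb
  exact ⟨e, x, y, hxy, hx, hy⟩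

/-- In a strongly connected transition system every region is a pre-region of
some event. -/
theorem region_is_preregion_of_strongly_connected {S E : Type*}
    (T : S → E → S → Prop)
    (hSC : ∀ s s' : S, Relation.ReflTransGen (fun a b => ∃ e, T a e b) s s') :
    ∀ r : Set S, IsRegion T r → ∃ e : E, Exits T e r := by
  rintro r ⟨⟨s, hs⟩, hne, -⟩
  obtain ⟨s', hs'⟩ := Set.nonempty_compl.mpr hne
  exact exists_exits_of_reflTransGen (hSC s s') hs hs'
end

section
/- If r1 and r2 are disjoint regions of a transition system and their union r1 ∪ r2 is a proper subset of the states, then r1 ∪ r2 is a region. -/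
/-!
A transition entering `r₁ ∪ r₂` enters, say, `r₁`, so every transition with the same label
enters `r₁`. None of them can leave `r₂` as well: it would then exit `r₂`, forcing the original
transition to start in `r₂`, i.e. inside the union. Exits are entries of the reversed system.
-/

section

variable {S E : Type*} {T : S → E → S → Prop} {r r₁ r₂ : Set S} {e : E} {s s' : S}

def reverseTransitions (T : S → E → S → Prop) : S → E → S → Prop := fun s e s' => T s' e s

theorem enters_reverseTransitions_iff : Enters (reverseTransitions T) e r ↔ Exits T e r :=
  ⟨fun ⟨s, s', hT, hs, hs'⟩ => ⟨s', s, hT, hs', hs⟩,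
    fun ⟨s, s', hT, hs, hs'⟩ => ⟨s', s, hT, hs', hs⟩⟩

theorem exits_reverseTransitions_iff : Exits (reverseTransitions T) e r ↔ Enters T e r :=
  ⟨fun ⟨s, s', hT, hs, hs'⟩ => ⟨s', s, hT, hs', hs⟩,
    fun ⟨s, s', hT, hs, hs'⟩ => ⟨s', s, hT, hs', hs⟩⟩

theorem enters_or_enters_of_enters_union (h : Enters T e (r₁ ∪ r₂)) :
    Enters T e r₁ ∨ Enters T e r₂ := by
  obtain ⟨s, s', hT, hs, hs' | hs'⟩ := h
  · exact .inl ⟨s, s', hT, fun h => hs (.inl h), hs'⟩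
  · exact .inr ⟨s, s', hT, fun h => hs (.inr h), hs'⟩

namespace IsRegion

theorem enters (h : IsRegion T r) (he : Enters T e r) (hT : T s e s') : s ∉ r ∧ s' ∈ r :=
  (h.2.2 e).1 he s s' hT

theorem exits (h : IsRegion T r) (he : Exits T e r) (hT : T s e s') : s ∈ r ∧ s' ∉ r :=
  (h.2.2 e).2 he s s' hT

theorem reverseTransitions (h : IsRegion T r) : IsRegion (reverseTransitions T) r :=
  ⟨h.1, h.2.1, fun _ => ⟨fun he _ _ hT => (h.exits (enters_reverseTransitions_iff.1 he) hT).symm,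
    fun he _ _ hT => (h.enters (exits_reverseTransitions_iff.1 he) hT).symm⟩⟩

theorem enters_union_of_enters_left (h₁ : IsRegion T r₁) (h₂ : IsRegion T r₂)
    (hdisj : Disjoint r₁ r₂) (he : Enters T e r₁) (hu : Enters T e (r₁ ∪ r₂))
    (hT : T s e s') : s ∉ r₁ ∪ r₂ ∧ s' ∈ r₁ ∪ r₂ := by
  obtain ⟨hs₁, hs'₁⟩ := h₁.enters he hT
  refine ⟨?_, .inl hs'₁⟩
  rintro (hs₁' | hs₂)
  · exact hs₁ hs₁'
  · obtain ⟨s₀, s₀', hT₀, hs₀, -⟩ := hu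
    have hex : Exits T e r₂ := ⟨s, s', hT, hs₂, hdisj.notMem_of_mem_left hs'₁⟩
    exact hs₀ (.inr (h₂.exits hex hT₀).1)

theorem enters_union (h₁ : IsRegion T r₁) (h₂ : IsRegion T r₂) (hdisj : Disjoint r₁ r₂)
    (hu : Enters T e (r₁ ∪ r₂)) (hT : T s e s') : s ∉ r₁ ∪ r₂ ∧ s' ∈ r₁ ∪ r₂ := by
  rcases enters_or_enters_of_enters_union hu with he₁ | he₂
  · exact h₁.enters_union_of_enters_left h₂ hdisj he₁ hu hT
  · rw [Set.union_comm] at hu ⊢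
    exact h₂.enters_union_of_enters_left h₁ hdisj.symm he₂ hu hT

end IsRegion

end

/-- The union of two disjoint regions is a region, provided it is a proper
subset of the states. -/
theorem union_of_disjoint_regions {S E : Type*} (T : S → E → S → Prop)
    (r₁ r₂ : Set S) (h₁ : IsRegion T r₁) (h₂ : IsRegion T r₂)
    (hdisj : Disjoint r₁ r₂) (hproper : r₁ ∪ r₂ ≠ Set.univ) :
    IsRegion T (r₁ ∪ r₂) :=
  ⟨h₁.1.mono Set.subset_union_left, hproper, fun _ =>
    ⟨fun hu _ _ => h₁.enters_union h₂ hdisj hu,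
      fun hu _ _ hT =>
        (h₁.reverseTransitions.enters_union h₂.reverseTransitions hdisj (enters_reverseTransitions_iff.2 hu) hT).symm⟩⟩
end

section
/- Reachability is preserved in derived state machines: if a set R of pairwise disjoint regions covers all states of a transition system TS in which all states are reachable from the initial state, then in the derived state machine (states R, initial region containing s0, edge (r,e,r') when e exits r and enters r') every region is reachable from the initial region. -/
/-!
Send every state to the unique region of `R` containing it. Since the regions are pairwise
disjoint, a transition `s -e-> s'` either stays inside one region or leaves the region of `s`
and enters the region of `s'`, i.e. it is an edge of the derived state machine. Hence every
path of the transition system projects to a path of the derived state machine; a path from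
`s₀` to any state of a region `r` (which is nonempty) projects to a path from `r₀` to `r`.
-/

section DerivedStateMachine

variable {S E : Type*} (T : S → E → S → Prop) (R : Set (Set S))

def DerivedStep (a b : Set S) : Prop :=
  a ∈ R ∧ b ∈ R ∧ ∃ e, Exits T e a ∧ Enters T e b

variable {T R}

theorem derivedStep_of_transition (hR : R.PairwiseDisjoint id) {r r' : Set S} (hr : r ∈ R)
    (hr' : r' ∈ R) (hne : r ≠ r') {s s' : S} {e : E} (hs : s ∈ r) (hs' : s' ∈ r')
    (hT : T s e s') : DerivedStep T R r r' := by
  have hs'r : s' ∉ r := fun h => hne (hR.elim_set hr hr' s' h hs')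
  have hsr' : s ∉ r' := fun h => hne (hR.elim_set hr hr' s hs h)
  exact ⟨hr, hr', e, ⟨s, s', hT, hs, hs'r⟩, ⟨s, s', hT, hsr', hs'⟩⟩

theorem reflTransGen_derivedStep_of_transition (hR : R.PairwiseDisjoint id) {r r' : Set S}
    (hr : r ∈ R) (hr' : r' ∈ R) {s s' : S} {e : E} (hs : s ∈ r) (hs' : s' ∈ r')
    (hT : T s e s') : Relation.ReflTransGen (DerivedStep T R) r r' := by
  by_cases hne : r = r'
  · exact hne ▸ Relation.ReflTransGen.refl
  · exact .single (derivedStep_of_transition hR hr hr' hne hs hs' hT)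

theorem reflTransGen_derivedStep_of_reflTransGen (hR : R.PairwiseDisjoint id)
    (hCov : ⋃₀ R = Set.univ) {r r' : Set S} (hr : r ∈ R) (hr' : r' ∈ R) {s s' : S}
    (hs : s ∈ r) (hs' : s' ∈ r') (hss' : Relation.ReflTransGen (fun a b => ∃ e, T a e b) s s') :
    Relation.ReflTransGen (DerivedStep T R) r r' := by
  choose region hregion_mem hmem_region using Set.sUnion_eq_univ_iff.1 hCov
  have hproj : Relation.ReflTransGen (DerivedStep T R) (region s) (region s') :=
    Relation.ReflTransGen.lift' region (fun a b (⟨_, hab⟩ : ∃ e, T a e b) =>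
      reflTransGen_derivedStep_of_transition hR (hregion_mem a) (hregion_mem b)
        (hmem_region a) (hmem_region b) hab) s s' hss'
  rwa [hR.elim_set (hregion_mem s) hr s (hmem_region s) hs,
    hR.elim_set (hregion_mem s') hr' s' (hmem_region s') hs'] at hproj

end DerivedStateMachine

theorem derived_SM_reachable_general {S E : Type*} (T : S → E → S → Prop) (s₀ : S)
    (hReach : ∀ s : S, Relation.ReflTransGen (fun a b => ∃ e, T a e b) s₀ s)
    (R : Set (Set S))
    (hReg : ∀ r ∈ R, IsRegion T r)
    (hDisj : ∀ r ∈ R, ∀ r' ∈ R, r ≠ r' → Disjoint r r')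
    (hCov : ⋃₀ R = Set.univ)
    (r₀ : Set S) (hr₀ : r₀ ∈ R) (hs₀ : s₀ ∈ r₀) :
    ∀ r ∈ R, Relation.ReflTransGen
      (fun a b => a ∈ R ∧ b ∈ R ∧ ∃ e, Exits T e a ∧ Enters T e b) r₀ r := by
  intro r hr
  obtain ⟨s, hs⟩ := (hReg r hr).1
  exact reflTransGen_derivedStep_of_reflTransGen hDisj hCov hr₀ hr hs₀ hs (hReach s)

/-- In the state machine derived from a disjoint covering set of regions of a
transition system whose states are all reachable, every region is reachable
from the initial region. -/
theorem derived_SM_reachable {S E : Type*} (T : S → E → S → Prop) (s₀ : S)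
    (hNoSelfLoop : ∀ s e s', T s e s' → s ≠ s')
    (hReach : ∀ s : S, Relation.ReflTransGen (fun a b => ∃ e, T a e b) s₀ s)
    (R : Set (Set S))
    (hReg : ∀ r ∈ R, IsRegion T r)
    (hDisj : ∀ r ∈ R, ∀ r' ∈ R, r ≠ r' → Disjoint r r')
    (hCov : ⋃₀ R = Set.univ)
    (r₀ : Set S) (hr₀ : r₀ ∈ R) (hs₀ : s₀ ∈ r₀) :
    ∀ r ∈ R, Relation.ReflTransGen
      (fun a b => a ∈ R ∧ b ∈ R ∧ ∃ e, Exits T e a ∧ Enters T e b) r₀ r :=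
  derived_SM_reachable_general T s₀ hReach R hReg hDisj hCov r₀ hr₀ hs₀
end

section
/- Forward simulation step for region decompositions: let TS be a transition system, and for i = 1..n let R_i be a disjoint covering set of regions of TS. Suppose s_j ∈ ⋂_i r_{j,i} with r_{j,i} ∈ R_i, and (s_j, e, s_k) ∈ T. Then for each i there exists r_{k,i} ∈ R_i with s_k ∈ r_{k,i}, such that either (a) no region of R_i is crossed by e and r_{k,i} = r_{j,i}, or (b) r_{j,i} is a pre-region of e in R_i and r_{k,i} is the post-region of e in R_i. Consequently s_k ∈ ⋂_i r_{k,i}. -/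
section RegionPartition

variable {S E : Type*} {T : S → E → S → Prop} {e : E} {s s' : S}

theorem IsRegion.mem_iff_not_mem_of_crossed {r : Set S} (hr : IsRegion T r)
    (hcross : Exits T e r ∨ Enters T e r) (hT : T s e s') : s ∈ r ↔ s' ∉ r := by
  rcases hcross with hex | hen
  · obtain ⟨hs, hs'⟩ := (hr.2.2 e).2 hex s s' hT
    exact iff_of_true hs hs'
  · obtain ⟨hs, hs'⟩ := (hr.2.2 e).1 hen s s' hT
    exact iff_of_false hs (not_not_intro hs')

variable {R : Set (Set S)}

theorem not_crossed_of_mem_same_block (hReg : ∀ r ∈ R, IsRegion T r)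
    (hDisj : R.PairwiseDisjoint id) {r : Set S} (hr : r ∈ R) (hs : s ∈ r) (hs' : s' ∈ r)
    (hT : T s e s') : ¬ ∃ r' ∈ R, Exits T e r' ∨ Enters T e r' := by
  rintro ⟨r', hr', hcross⟩
  have hiff := (hReg r' hr').mem_iff_not_mem_of_crossed hcross hT
  by_cases hsr' : s ∈ r'
  · exact hiff.1 hsr' (hDisj.elim_set hr hr' s hs hsr' ▸ hs')
  · have hs'r' : s' ∈ r' := not_not.1 (mt hiff.2 hsr')
    exact hsr' (hDisj.elim_set hr hr' s' hs' hs'r' ▸ hs)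

theorem exits_and_enters_of_leaves_block (hDisj : R.PairwiseDisjoint id) {r r' : Set S}
    (hr : r ∈ R) (hr' : r' ∈ R) (hs : s ∈ r) (hs' : s' ∈ r') (hs'r : s' ∉ r)
    (hT : T s e s') : Exits T e r ∧ Enters T e r' := by
  have hsr' : s ∉ r' := fun hsr' => hs'r (hDisj.elim_set hr' hr s hsr' hs ▸ hs')
  exact ⟨⟨s, s', hT, hs, hs'r⟩, ⟨s, s', hT, hsr', hs'⟩⟩

theorem exists_successor_block (hReg : ∀ r ∈ R, IsRegion T r) (hDisj : R.PairwiseDisjoint id)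
    (hCov : ⋃₀ R = Set.univ) {r : Set S} (hr : r ∈ R) (hs : s ∈ r) (hT : T s e s') :
    ∃ r' ∈ R, s' ∈ r' ∧
      (((¬ ∃ r'' ∈ R, Exits T e r'' ∨ Enters T e r'') ∧ r' = r) ∨
        (Exits T e r ∧ Enters T e r')) := by
  by_cases hs'r : s' ∈ r
  · exact ⟨r, hr, hs'r, Or.inl ⟨not_crossed_of_mem_same_block hReg hDisj hr hs hs'r hT, rfl⟩⟩
  · obtain ⟨r', hr', hs'r'⟩ := Set.sUnion_eq_univ_iff.1 hCov s'
    exact ⟨r', hr', hs'r', Or.inr (exits_and_enters_of_leaves_block hDisj hr hr' hs hs'r' hs'r hT)⟩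

end RegionPartition

theorem forward_simulation_step_general {S E ι : Type*} (T : S → E → S → Prop)
    (R : ι → Set (Set S))
    (hReg : ∀ i, ∀ r ∈ R i, IsRegion T r)
    (hDisj : ∀ i, ∀ r ∈ R i, ∀ r' ∈ R i, r ≠ r' → Disjoint r r')
    (hCov : ∀ i, ⋃₀ R i = Set.univ)
    (sj sk : S) (e : E)
    (rj : ι → Set S) (hrj : ∀ i, rj i ∈ R i ∧ sj ∈ rj i)
    (hT : T sj e sk) :
    ∃ rk : ι → Set S,
      (∀ i, rk i ∈ R i ∧ sk ∈ rk i ∧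
        (((¬ ∃ r ∈ R i, Exits T e r ∨ Enters T e r) ∧ rk i = rj i) ∨
          (Exits T e (rj i) ∧ Enters T e (rk i)))) ∧
      sk ∈ ⋂ i, rk i := by
  choose rk hrk hsk hstep using fun i =>
    exists_successor_block (hReg i) (hDisj i) (hCov i) (hrj i).1 (hrj i).2 hT
  exact ⟨rk, fun i => ⟨hrk i, hsk i, hstep i⟩, Set.mem_iInter.2 hsk⟩

/-- Forward simulation step for region decompositions. -/
theorem forward_simulation_step {S E ι : Type*} (T : S → E → S → Prop)
    (hNoSelfLoop : ∀ s e s', T s e s' → s ≠ s')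
    (R : ι → Set (Set S))
    (hReg : ∀ i, ∀ r ∈ R i, IsRegion T r)
    (hDisj : ∀ i, ∀ r ∈ R i, ∀ r' ∈ R i, r ≠ r' → Disjoint r r')
    (hCov : ∀ i, ⋃₀ R i = Set.univ)
    (sj sk : S) (e : E)
    (rj : ι → Set S) (hrj : ∀ i, rj i ∈ R i ∧ sj ∈ rj i)
    (hT : T sj e sk) :
    ∃ rk : ι → Set S,
      (∀ i, rk i ∈ R i ∧ sk ∈ rk i ∧
        (((¬ ∃ r ∈ R i, Exits T e r ∨ Enters T e r) ∧ rk i = rj i) ∨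
          (Exits T e (rj i) ∧ Enters T e (rk i)))) ∧
      sk ∈ ⋂ i, rk i :=
  forward_simulation_step_general T R hReg hDisj hCov sj sk e rj hrj hT
end

section
/- Main equivalence theorem: let TS = (S, E, T, s0) be a transition system with no self-loops, and let SM_1, ..., SM_n be state machines derived from disjoint covering sets of regions R_1, ..., R_n of TS such that the union of all these regions satisfies excitation closure (for every event e, the intersection of all pre-regions of e in ⋃ R_i equals ES(e)) and event effectiveness (every event has a pre-region in ⋃ R_i). Then the relation B = { (s, (r_1,...,r_n)) : s ∈ ⋂_i r_i } is a bisimulation between TS and the synchronous product RG(SM_1) || ... || RG(SM_n). -/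
/-- The excitation set of an event. -/
def ES {S E : Type*} (T : S → E → S → Prop) (e : E) : Set S :=
  {s | ∃ s', T s e s'}

/-- e is an event of the state machine derived from the set of regions Rᵢ,
i.e. it crosses some region of Rᵢ. -/
def SMEvent {S E : Type*} (T : S → E → S → Prop) (Rᵢ : Set (Set S))
    (e : E) : Prop :=
  ∃ r ∈ Rᵢ, Exits T e r ∨ Enters T e r

/-- Transition relation of the synchronous product of the reachability graphs
of the state machines derived from the sets of regions R i: a shared event
fires synchronously in all components containing it, and leaves the other
components unchanged. -/
def ProdSMT {S E ι : Type*} (T : S → E → S → Prop) (R : ι → Set (Set S)) :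
    (ι → Set S) → E → (ι → Set S) → Prop :=
  fun ρ e ρ' =>
    (∃ i, SMEvent T (R i) e) ∧
    ∀ i, (SMEvent T (R i) e →
            ρ i ∈ R i ∧ ρ' i ∈ R i ∧ Exits T e (ρ i) ∧ Enters T e (ρ' i)) ∧
         (¬ SMEvent T (R i) e → ρ' i = ρ i)

def IsBisimulation {S₁ S₂ E : Type*} (T₁ : S₁ → E → S₁ → Prop)
    (T₂ : S₂ → E → S₂ → Prop) (s₀₁ : S₁) (s₀₂ : S₂)
    (B : S₁ → S₂ → Prop) : Prop :=
  B s₀₁ s₀₂ ∧ ∀ p q, B p q →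
    (∀ e p', T₁ p e p' → ∃ q', T₂ q e q' ∧ B p' q') ∧
    (∀ e q', T₂ q e q' → ∃ p', T₁ p e p' ∧ B p' q')

/-!
A transition `s -e-> s'` of the transition system is matched in the product by moving every
component to the block of its partition that contains `s'`. This is a legal product step: if `e`
crosses some region of a partition, every `e`-transition crosses it, so `e` leaves the block of `s`
and enters the block of `s'`; otherwise `s` and `s'` lie in the same block.

Conversely, if the product fires `e` from `ρ`, every pre-region of `e` coincides with the exited
block `ρ i` of its partition, since both contain the source of any `e`-transition. Hence `s` lies in
every pre-region of `e`, so `s ∈ ES T e` by excitation closure, and the target `s'` of such a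
transition lies in every block entered by `e`.
-/

section RegionPartition

variable {S E : Type*} {T : S → E → S → Prop} {e : E} {s s' : S} {r r' : Set S}
  {P : Set (Set S)}

theorem IsRegion.mem_notMem_of_exits (hr : IsRegion T r) (he : Exits T e r) (hT : T s e s') :
    s ∈ r ∧ s' ∉ r :=
  (hr.2.2 e).2 he s s' hT

theorem IsRegion.notMem_mem_of_enters (hr : IsRegion T r) (he : Enters T e r) (hT : T s e s') :
    s ∉ r ∧ s' ∈ r :=
  (hr.2.2 e).1 he s s' hT

structure IsRegionPartition (T : S → E → S → Prop) (P : Set (Set S)) : Prop where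
  isRegion : ∀ r ∈ P, IsRegion T r
  pairwiseDisjoint : P.PairwiseDisjoint id
  sUnion_eq_univ : ⋃₀ P = Set.univ

namespace IsRegionPartition

theorem eq_of_mem (hP : IsRegionPartition T P) (hr : r ∈ P) (hr' : r' ∈ P) (hs : s ∈ r)
    (hs' : s ∈ r') : r = r' :=
  hP.pairwiseDisjoint.elim_set hr hr' s hs hs'

theorem exists_mem (hP : IsRegionPartition T P) (s : S) : ∃ r ∈ P, s ∈ r :=
  Set.mem_sUnion.1 (hP.sUnion_eq_univ ▸ Set.mem_univ s)

theorem eq_of_exits (hP : IsRegionPartition T P) (hr : r ∈ P) (hr' : r' ∈ P) (he : Exits T e r)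
    (he' : Exits T e r') : r = r' := by
  obtain ⟨a, b, hab, -⟩ := id he
  exact hP.eq_of_mem hr hr' ((hP.isRegion r hr).mem_notMem_of_exits he hab).1
    ((hP.isRegion r' hr').mem_notMem_of_exits he' hab).1

theorem notMem_of_smEvent (hP : IsRegionPartition T P) (hr : r ∈ P) (hs : s ∈ r) (hT : T s e s')
    (he : SMEvent T P e) : s' ∉ r := by
  obtain ⟨c, hc, hex | hen⟩ := he
  · obtain ⟨hsc, hs'c⟩ := (hP.isRegion c hc).mem_notMem_of_exits hex hT
    rwa [hP.eq_of_mem hc hr hsc hs] at hs'c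
  · obtain ⟨hsc, hs'c⟩ := (hP.isRegion c hc).notMem_mem_of_enters hen hT
    intro hs'r
    exact hsc (hP.eq_of_mem hr hc hs'r hs'c ▸ hs)

end IsRegionPartition

theorem mem_of_not_smEvent (hr : r ∈ P) (hs : s ∈ r) (hT : T s e s') (he : ¬ SMEvent T P e) :
    s' ∈ r := by
  by_contra hs'
  exact he ⟨r, hr, Or.inl ⟨s, s', hT, hs, hs'⟩⟩

section Product

variable {ι : Type*} {R : ι → Set (Set S)} {ρ ρ' : ι → Set S}

theorem exists_prodSMT_of_step (hR : ∀ i, IsRegionPartition T (R i)) (hρ : ∀ i, ρ i ∈ R i)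
    (hs : s ∈ ⋂ i, ρ i) (hT : T s e s') (he : ∃ i, SMEvent T (R i) e) :
    ∃ ρ', ProdSMT T R ρ e ρ' ∧ (∀ i, ρ' i ∈ R i) ∧ s' ∈ ⋂ i, ρ' i := by
  choose blk hblk hs'blk using fun i => (hR i).exists_mem s'
  have hsρ : ∀ i, s ∈ ρ i := Set.mem_iInter.1 hs
  refine ⟨blk, ⟨he, fun i => ⟨fun hei => ?_, fun hei => ?_⟩⟩, hblk, Set.mem_iInter.2 hs'blk⟩
  · have hs'ρ := (hR i).notMem_of_smEvent (hρ i) (hsρ i) hT hei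
    have hsblk : s ∉ blk i := fun hsblk =>
      hs'ρ ((hR i).eq_of_mem (hblk i) (hρ i) hsblk (hsρ i) ▸ hs'blk i)
    exact ⟨hρ i, hblk i, ⟨s, s', hT, hsρ i, hs'ρ⟩, ⟨s, s', hT, hsblk, hs'blk i⟩⟩
  · exact (hR i).eq_of_mem (hblk i) (hρ i) (hs'blk i)
      (mem_of_not_smEvent (hρ i) (hsρ i) hT hei)

theorem mem_ES_of_prodSMT (hR : ∀ i, IsRegionPartition T (R i))
    (hEC : ⋂₀ {r | (∃ i, r ∈ R i) ∧ Exits T e r} ⊆ ES T e)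
    (hstep : ProdSMT T R ρ e ρ') (hs : s ∈ ⋂ i, ρ i) : s ∈ ES T e := by
  refine hEC (Set.mem_sInter.2 ?_)
  rintro r ⟨⟨i, hr⟩, hex⟩
  obtain ⟨hρi, -, hρex, -⟩ := (hstep.2 i).1 ⟨r, hr, Or.inl hex⟩
  exact (hR i).eq_of_exits hr hρi hex hρex ▸ Set.mem_iInter.1 hs i

theorem mem_of_prodSMT (hR : ∀ i, IsRegionPartition T (R i)) (hρ : ∀ i, ρ i ∈ R i)
    (hs : s ∈ ⋂ i, ρ i) (hstep : ProdSMT T R ρ e ρ') (hT : T s e s') :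
    (∀ i, ρ' i ∈ R i) ∧ s' ∈ ⋂ i, ρ' i := by
  have hcomp : ∀ i, ρ' i ∈ R i ∧ s' ∈ ρ' i := fun i => by
    by_cases hei : SMEvent T (R i) e
    · obtain ⟨-, hρ'i, -, hen⟩ := (hstep.2 i).1 hei
      exact ⟨hρ'i, (((hR i).isRegion _ hρ'i).notMem_mem_of_enters hen hT).2⟩
    · rw [(hstep.2 i).2 hei]
      exact ⟨hρ i, mem_of_not_smEvent (hρ i) (Set.mem_iInter.1 hs i) hT hei⟩
  exact ⟨fun i => (hcomp i).1, Set.mem_iInter.2 fun i => (hcomp i).2⟩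

end Product

end RegionPartition

theorem TS_bisimilar_product_of_SMs_general {S E ι : Type*} (T : S → E → S → Prop)
    (s₀ : S)
    (R : ι → Set (Set S))
    (hReg : ∀ i, ∀ r ∈ R i, IsRegion T r)
    (hDisj : ∀ i, ∀ r ∈ R i, ∀ r' ∈ R i, r ≠ r' → Disjoint r r')
    (hCov : ∀ i, ⋃₀ R i = Set.univ)
    (hEC : ∀ e : E, ⋂₀ {r | (∃ i, r ∈ R i) ∧ Exits T e r} = ES T e)
    (hEff : ∀ e : E, ∃ r, (∃ i, r ∈ R i) ∧ Exits T e r)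
    (ρ₀ : ι → Set S) (hρ₀ : ∀ i, ρ₀ i ∈ R i ∧ s₀ ∈ ρ₀ i) :
    IsBisimulation T (ProdSMT T R) s₀ ρ₀
      (fun s ρ => (∀ i, ρ i ∈ R i) ∧ s ∈ ⋂ i, ρ i) := by
  have hR : ∀ i, IsRegionPartition T (R i) := fun i => ⟨hReg i, hDisj i, hCov i⟩
  refine ⟨⟨fun i => (hρ₀ i).1, Set.mem_iInter.2 fun i => (hρ₀ i).2⟩, ?_⟩
  rintro s ρ ⟨hρ, hs⟩
  refine ⟨fun e s' hT => ?_, fun e ρ' hstep => ?_⟩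
  · obtain ⟨r, ⟨i, hr⟩, hex⟩ := hEff e
    exact exists_prodSMT_of_step hR hρ hs hT ⟨i, r, hr, Or.inl hex⟩
  · obtain ⟨s', hT⟩ := mem_ES_of_prodSMT hR (hEC e).subset hstep hs
    exact ⟨s', hT, mem_of_prodSMT hR hρ hs hstep hT⟩

/-- Main equivalence theorem: under excitation closure and event effectiveness
of the union of the region sets, the relation B = {(s, ρ) : s ∈ ⋂ i, ρ i} is a
bisimulation between the transition system and the synchronous product of the
derived state machines. -/
theorem TS_bisimilar_product_of_SMs {S E ι : Type*} (T : S → E → S → Prop)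
    (s₀ : S)
    (hNoSelfLoop : ∀ s e s', T s e s' → s ≠ s')
    (R : ι → Set (Set S))
    (hReg : ∀ i, ∀ r ∈ R i, IsRegion T r)
    (hDisj : ∀ i, ∀ r ∈ R i, ∀ r' ∈ R i, r ≠ r' → Disjoint r r')
    (hCov : ∀ i, ⋃₀ R i = Set.univ)
    (hEC : ∀ e : E, ⋂₀ {r | (∃ i, r ∈ R i) ∧ Exits T e r} = ES T e)
    (hEff : ∀ e : E, ∃ r, (∃ i, r ∈ R i) ∧ Exits T e r)
    (ρ₀ : ι → Set S) (hρ₀ : ∀ i, ρ₀ i ∈ R i ∧ s₀ ∈ ρ₀ i) :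
    IsBisimulation T (ProdSMT T R) s₀ ρ₀
      (fun s ρ => (∀ i, ρ i ∈ R i) ∧ s ∈ ⋂ i, ρ i) :=
  TS_bisimilar_product_of_SMs_general T s₀ R hReg hDisj hCov hEC hEff ρ₀ hρ₀
end

section
/- If two states s1, s2 of a transition system belong to exactly the same regions of an excitation-closed collection R (i.e., ∀ r ∈ R, s1 ∈ r ↔ s2 ∈ r), then s1 and s2 enable exactly the same events: for every event e, e is enabled at s1 iff e is enabled at s2. -/
theorem Set.mem_sInter_iff_of_forall_mem_iff {α : Type*} {C : Set (Set α)} {a b : α}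
    (h : ∀ r ∈ C, a ∈ r ↔ b ∈ r) : a ∈ ⋂₀ C ↔ b ∈ ⋂₀ C := by
  simp only [Set.mem_sInter]
  exact forall₂_congr h

theorem same_regions_same_enabled_events_general {S E : Type*}
    (T : S → E → S → Prop) (R : Set (Set S))
    (hEC : ∀ e : E, ⋂₀ {r | r ∈ R ∧ Exits T e r} = ES T e)
    (s₁ s₂ : S) (hsame : ∀ r ∈ R, s₁ ∈ r ↔ s₂ ∈ r) :
    ∀ e : E, (∃ s', T s₁ e s') ↔ (∃ s', T s₂ e s') := by
  intro e
  have h := Set.mem_sInter_iff_of_forall_mem_iff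
    (C := {r | r ∈ R ∧ Exits T e r}) fun r hr => hsame r hr.1
  rwa [hEC e] at h

/-- States belonging to exactly the same regions of an excitation-closed
collection enable exactly the same events. -/
theorem same_regions_same_enabled_events {S E : Type*}
    (T : S → E → S → Prop) (R : Set (Set S))
    (hReg : ∀ r ∈ R, IsRegion T r)
    (hEC : ∀ e : E, ⋂₀ {r | r ∈ R ∧ Exits T e r} = ES T e)
    (hEff : ∀ e : E, ∃ r ∈ R, Exits T e r)
    (s₁ s₂ : S) (hsame : ∀ r ∈ R, s₁ ∈ r ↔ s₂ ∈ r) :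
    ∀ e : E, (∃ s', T s₁ e s') ↔ (∃ s', T s₂ e s') :=
  same_regions_same_enabled_events_general T R hEC s₁ s₂ hsame
end

section
/- In a state machine derived from a disjoint covering set of regions, every label appears on exactly one edge or on no edge: for any event e, there is at most one pair (r, r') of regions in R with an edge (r, e, r'). -/
namespace IsRegion

variable {S E : Type*} {T : S → E → S → Prop} {r : Set S} {e : E}

theorem mem_of_exits (hr : IsRegion T r) (he : Exits T e r) {s s' : S} (hT : T s e s') :
    s ∈ r ∧ s' ∉ r :=
  (hr.2.2 e).2 he s s' hT

theorem mem_of_enters (hr : IsRegion T r) (he : Enters T e r) {s s' : S} (hT : T s e s') :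
    s ∉ r ∧ s' ∈ r :=
  (hr.2.2 e).1 he s s' hT

end IsRegion

theorem label_on_at_most_one_edge_general {S E : Type*} (T : S → E → S → Prop)
    (R : Set (Set S))
    (hReg : ∀ r ∈ R, IsRegion T r)
    (hDisj : ∀ r ∈ R, ∀ r' ∈ R, r ≠ r' → Disjoint r r') :
    ∀ e : E, ∀ r₁ ∈ R, ∀ r₁' ∈ R, ∀ r₂ ∈ R, ∀ r₂' ∈ R,
      Exits T e r₁ → Enters T e r₁' → Exits T e r₂ → Enters T e r₂' →
      r₁ = r₂ ∧ r₁' = r₂' := by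
  intro e r₁ h₁ r₁' h₁' r₂ h₂ r₂' h₂' hx₁ hn₁ hx₂ hn₂
  have hR : R.PairwiseDisjoint id := hDisj
  -- By uniformity, one e-transition s → s' witnesses all four exits and entries.
  obtain ⟨s, s', hT, hs₁, -⟩ := hx₁
  have hs₂ := ((hReg r₂ h₂).mem_of_exits hx₂ hT).1
  have hs₁' := ((hReg r₁' h₁').mem_of_enters hn₁ hT).2
  have hs₂' := ((hReg r₂' h₂').mem_of_enters hn₂ hT).2
  exact ⟨hR.elim_set h₁ h₂ s hs₁ hs₂, hR.elim_set h₁' h₂' s' hs₁' hs₂'⟩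

/-- In a state machine derived from a disjoint covering set of regions, every
label appears on at most one edge. -/
theorem label_on_at_most_one_edge {S E : Type*} (T : S → E → S → Prop)
    (hNoSelfLoop : ∀ s e s', T s e s' → s ≠ s')
    (R : Set (Set S))
    (hReg : ∀ r ∈ R, IsRegion T r)
    (hDisj : ∀ r ∈ R, ∀ r' ∈ R, r ≠ r' → Disjoint r r')
    (hCov : ⋃₀ R = Set.univ) :
    ∀ e : E, ∀ r₁ ∈ R, ∀ r₁' ∈ R, ∀ r₂ ∈ R, ∀ r₂' ∈ R,
      Exits T e r₁ → Enters T e r₁' → Exits T e r₂ → Enters T e r₂' →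
      r₁ = r₂ ∧ r₁' = r₂' :=
  label_on_at_most_one_edge_general T R hReg hDisj
end
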